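/- Consider any solution x : [0, T] → ℝⁿ of the system with x(0) ∈ [0,∞)ⁿ. Suppose there is some j ∈ {1,…,m} such that x_ℓ(0) > 0 for all ℓ ∈ S_j. Then x(t) ∈ (0,∞)ⁿ for all t ∈ (0, T]. -/

import Mathlib

/-!
Along a solution on `[0, T]`, each coordinate satisfies `x_k' ≥ -C |x_k|`: every reaction
consuming species `k` runs at a rate containing a factor `θ(x_k)^b` with `b ≥ 1`, and
`θ(x_k)^b ≤ const · θ(x_k) ≤ const · |x_k|` because `θ` is locally Lipschitz with `θ 0 = 0`.
Comparison with exponential barriers shows that coordinates stay nonnegative and that positive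
coordinates stay positive. If a reaction `j → i` (`A i j > 0`) has all species of the complex `j`
positive on `(0, T]`, then each species `k` of `i` not in `j` gets a positive production term,
`x_k' ≥ g - C |x_k|` with `g > 0`, and a linear barrier makes `x_k` positive on `(0, T]` as well.
Irreducibility of `A` spreads this from the complex `j₀` to every complex, and every species
belongs to some complex.
-/

open Set Real

section Comparison

variable {u u' : ℝ → ℝ} {a b C : ℝ}

lemma le_of_deriv_lt_deriv_boundary {φ φ' : ℝ → ℝ}
    (hu : ∀ t ∈ Icc a b, HasDerivWithinAt u (u' t) (Icc a b) t)
    (hφ : ∀ t, HasDerivAt φ (φ' t) t) (ha : φ a ≤ u a)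
    (hbdry : ∀ t ∈ Ico a b, φ t = u t → φ' t < u' t) : ∀ t ∈ Icc a b, φ t ≤ u t :=
  image_le_of_deriv_right_lt_deriv_boundary'
    (fun t _ => (hφ t).continuousAt.continuousWithinAt) (fun t _ => (hφ t).hasDerivWithinAt) ha
    (fun t ht => (hu t ht).continuousWithinAt)
    (fun t ht => (hu t (Ico_subset_Icc_self ht)).mono_of_mem_nhdsWithin
      (Icc_mem_nhdsGE_of_mem ht))
    hbdry

lemma hasDerivAt_mul_exp_mul_sub (c κ a t : ℝ) :
    HasDerivAt (fun s => c * exp (κ * (s - a))) (κ * (c * exp (κ * (t - a)))) t :=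
  ((((hasDerivAt_id t).sub_const a).const_mul κ).exp.const_mul c).congr_deriv
    (by simp only [id]; ring)

lemma mul_exp_le_of_neg_mul_abs_le_deriv (hC : 0 ≤ C)
    (hu : ∀ t ∈ Icc a b, HasDerivWithinAt u (u' t) (Icc a b) t)
    (ha : 0 ≤ u a) (hbound : ∀ t ∈ Icc a b, -C * |u t| ≤ u' t) :
    ∀ t ∈ Icc a b, u a * exp (-C * (t - a)) ≤ u t := by
  intro t ht
  refine le_of_forall_pos_le_add fun δ hδ => ?_
  -- the correction `ε e^{(C+1)(s-a)}` outgrows the loss allowed by `hbound`: the barrier is strict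
  set ε := δ / exp ((C + 1) * (t - a))
  have hε : 0 < ε := div_pos hδ (exp_pos _)
  have hεδ : ε * exp ((C + 1) * (t - a)) = δ := div_mul_cancel₀ _ (exp_pos _).ne'
  have key := le_of_deriv_lt_deriv_boundary hu
    (fun s => (hasDerivAt_mul_exp_mul_sub (u a) (-C) a s).sub
      (hasDerivAt_mul_exp_mul_sub ε (C + 1) a s)) (by simp [hε.le]) ?_ t ht
  · rw [Pi.sub_apply] at key
    linarith
  · intro s hs heq
    have hP : 0 ≤ u a * exp (-C * (s - a)) := mul_nonneg ha (exp_pos _).le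
    have hQ : 0 < ε * exp ((C + 1) * (s - a)) := mul_pos hε (exp_pos _)
    have habs : |u s| ≤ u a * exp (-C * (s - a)) + ε * exp ((C + 1) * (s - a)) := by
      rw [← heq, Pi.sub_apply]
      exact (abs_sub _ _).trans (by rw [abs_of_nonneg hP, abs_of_pos hQ])
    nlinarith [hbound s (Ico_subset_Icc_self hs), mul_le_mul_of_nonneg_left habs hC]

lemma pos_of_pos_sub_mul_abs_le_deriv {β : ℝ} (hβ : 0 < β) (hC : 0 ≤ C)
    (hu : ∀ t ∈ Icc a b, HasDerivWithinAt u (u' t) (Icc a b) t) (ha : 0 ≤ u a)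
    (hbound : ∀ t ∈ Icc a b, β - C * |u t| ≤ u' t) : ∀ t ∈ Ioc a b, 0 < u t := by
  intro t ht
  have hab : 0 ≤ b - a := by linarith [ht.1, ht.2]
  -- linear barrier `κ (s - a)`, with `κ (1 + C (b - a)) = β / 2`
  set κ := β / (2 * (1 + C * (b - a)))
  have hden : 0 < 2 * (1 + C * (b - a)) := by positivity
  have hκ : 0 < κ := div_pos hβ hden
  have hκβ : κ * (2 * (1 + C * (b - a))) = β := div_mul_cancel₀ _ hden.ne'
  have key := le_of_deriv_lt_deriv_boundary hu
    (fun s => ((hasDerivAt_id s).sub_const a).const_mul κ) (by simpa using ha) ?_ t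
    (Ioc_subset_Icc_self ht)
  · simp only [id] at key
    nlinarith [ht.1]
  · intro s hs heq
    simp only [id] at heq ⊢
    have habs : |u s| ≤ κ * (b - a) := by
      rw [← heq, abs_of_nonneg (by nlinarith [hs.1])]
      nlinarith [hs.2]
    nlinarith [hbound s (Ico_subset_Icc_self hs), mul_le_mul_of_nonneg_left habs hC]

lemma pos_of_sub_mul_abs_le_deriv {g : ℝ → ℝ} (hC : 0 ≤ C)
    (hu : ∀ t ∈ Icc a b, HasDerivWithinAt u (u' t) (Icc a b) t) (ha : 0 ≤ u a)
    (hg : ContinuousOn g (Icc a b)) (hg0 : ∀ t ∈ Icc a b, 0 ≤ g t)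
    (hgpos : ∀ t ∈ Ioc a b, 0 < g t) (hbound : ∀ t ∈ Icc a b, g t - C * |u t| ≤ u' t) :
    ∀ t ∈ Ioc a b, 0 < u t := by
  intro t ht
  obtain ⟨s, has, hst⟩ := exists_between ht.1
  have hsub : Icc s t ⊆ Icc a b := Icc_subset_Icc has.le ht.2
  have hus : 0 ≤ u s :=
    (mul_nonneg ha (exp_pos _).le).trans <| mul_exp_le_of_neg_mul_abs_le_deriv hC hu ha
      (fun r hr => by linarith [hg0 r hr, hbound r hr]) s ⟨has.le, hst.le.trans ht.2⟩
  obtain ⟨r, hr, hrmin⟩ := isCompact_Icc.exists_isMinOn (nonempty_Icc.2 hst.le) (hg.mono hsub)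
  refine pos_of_pos_sub_mul_abs_le_deriv (hgpos r ⟨has.trans_le hr.1, (hsub hr).2⟩) hC
    (fun q hq => (hu q (hsub hq)).mono hsub) hus (fun q hq => ?_) t ⟨hst, le_rfl⟩
  linarith [hbound q (hsub hq), isMinOn_iff.1 hrmin q hq]

end Comparison

lemma Matrix.of_one_add_pow_apply_pos {κ : Type*} [Fintype κ] [DecidableEq κ]
    {A : Matrix κ κ ℝ} (hA : ∀ i j, 0 ≤ A i j) {p : κ → Prop} {j₀ : κ} (h₀ : p j₀)
    (hstep : ∀ i j, 0 < A i j → p j → p i) (r : ℕ) (i : κ) (hr : 0 < ((1 + A) ^ r) i j₀) :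
    p i := by
  induction r generalizing i with
  | zero =>
    obtain rfl : i = j₀ := by
      by_contra h
      simp [Matrix.one_apply_ne h] at hr
    exact h₀
  | succ r ih =>
    rw [pow_succ', Matrix.mul_apply] at hr
    obtain ⟨j, -, hj⟩ :=
      Finset.exists_lt_of_sum_lt (f := fun _ => (0 : ℝ)) (by simpa using hr)
    have hij : 0 ≤ (1 + A) i j := by
      rw [Matrix.add_apply, Matrix.one_apply]
      split_ifs <;> linarith [hA i j]
    obtain ⟨hij, hjr⟩ := (pos_and_pos_or_neg_and_neg_of_mul_pos hj).resolve_right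
      fun h => hij.not_gt h.1
    by_cases h : i = j
    · exact h ▸ ih j hjr
    · exact hstep i j (by simpa [Matrix.one_apply_ne h] using hij) (ih j hjr)

lemma LocallyLipschitz.exists_abs_le_mul_abs {θ : ℝ → ℝ} (hθ : LocallyLipschitz θ)
    (hθ0 : θ 0 = 0) (M : ℝ) : ∃ L, 0 ≤ L ∧ ∀ y, |y| ≤ M → |θ y| ≤ L * |y| := by
  obtain ⟨K, hK⟩ := hθ.locallyLipschitzOn.exists_lipschitzOnWith_of_compact
    (isCompact_Icc (a := -M) (b := M))
  refine ⟨K, K.2, fun y hy => ?_⟩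
  have h0 : (0 : ℝ) ∈ Icc (-M) M := ⟨by linarith [abs_nonneg y], by linarith [abs_nonneg y]⟩
  simpa [hθ0, Real.dist_eq] using hK.dist_le_mul y (abs_le.1 hy) 0 h0

lemma rpow_le_mul_rpow {z R b : ℝ} (hz : 0 ≤ z) (hzR : z ≤ R) (hR : 1 ≤ R) (hb : 1 ≤ b) :
    z ^ b ≤ z * R ^ b := by
  rcases hz.eq_or_lt with rfl | hz
  · rw [zero_rpow (by linarith), zero_mul]
  calc z ^ b = z * z ^ (b - 1) := by
        rw [← rpow_one_add' hz.le (by linarith), add_sub_cancel]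
    _ ≤ z * R ^ b := by
        gcongr
        exact (rpow_le_rpow hz.le hzR (by linarith)).trans
          (rpow_le_rpow_of_exponent_le hR (by linarith))

namespace MassAction

variable {ι κ : Type*} [Fintype ι]

noncomputable def monomial (B : Matrix ι κ ℝ) (z : ι → ℝ) (j : κ) : ℝ := ∏ l, z l ^ B l j

noncomputable def field [Fintype κ] (A : Matrix κ κ ℝ) (B : Matrix ι κ ℝ) (z : ι → ℝ) (k : ι) :
    ℝ :=
  ∑ i, ∑ j, A i j * monomial B z j * (B k i - B k j)

noncomputable def consumptionBound [Fintype κ] (A : Matrix κ κ ℝ) (B : Matrix ι κ ℝ) (R : ℝ)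
    (k : ι) : ℝ :=
  ∑ i, ∑ j, A i j * B k j * ∏ l, R ^ B l j

variable {A : Matrix κ κ ℝ} {B : Matrix ι κ ℝ} {z : ι → ℝ} {R : ℝ}

lemma monomial_nonneg (hz : ∀ l, 0 ≤ z l) (j : κ) : 0 ≤ monomial B z j :=
  Finset.prod_nonneg fun l _ => rpow_nonneg (hz l) _

lemma monomial_pos (hB : ∀ l j, 0 ≤ B l j) {j : κ} (hz : ∀ l, 0 < B l j → 0 < z l) :
    0 < monomial B z j :=
  Finset.prod_pos fun l _ => by
    rcases (hB l j).eq_or_lt with h | h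
    · rw [← h, rpow_zero]; exact one_pos
    · exact rpow_pos_of_pos (hz l h) _

lemma continuousOn_monomial {θ : ℝ → ℝ} (hθ : Continuous θ) (hB : ∀ l j, 0 ≤ B l j)
    {K : Set ℝ} {x : ℝ → EuclideanSpace ℝ ι} (hx : ContinuousOn x K) (j : κ) :
    ContinuousOn (fun s => monomial B (fun l => θ (x s l)) j) K :=
  continuousOn_finsetProd _ fun l _ =>
    (hθ.comp_continuousOn ((EuclideanSpace.proj (𝕜 := ℝ) l).continuous.comp_continuousOn hx)
      ).rpow_const fun _ _ => Or.inr (hB l j)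

lemma monomial_le_mul (hz : ∀ l, 0 ≤ z l) (hzR : ∀ l, z l ≤ R) (hR : 1 ≤ R)
    (hB : ∀ l j, 0 ≤ B l j) {k : ι} {j : κ} (hkj : 1 ≤ B k j) :
    monomial B z j ≤ z k * ∏ l, R ^ B l j := by
  classical
  have hRB : ∀ l, z l ^ B l j ≤ R ^ B l j := fun l => rpow_le_rpow (hz l) (hzR l) (hB l j)
  rw [monomial, ← Finset.mul_prod_erase _ _ (Finset.mem_univ k),
    ← Finset.mul_prod_erase _ _ (Finset.mem_univ k), ← mul_assoc]
  exact mul_le_mul (rpow_le_mul_rpow (hz k) (hzR k) hR hkj)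
    (Finset.prod_le_prod (fun l _ => rpow_nonneg (hz l) _) fun l _ => hRB l)
    (Finset.prod_nonneg fun l _ => rpow_nonneg (hz l) _)
    (mul_nonneg (hz k) (rpow_nonneg (by linarith) _))

lemma neg_mul_le_term (hz : ∀ l, 0 ≤ z l) (hzR : ∀ l, z l ≤ R) (hR : 1 ≤ R)
    (hA : ∀ i j, 0 ≤ A i j) (hB : ∀ l j, 0 ≤ B l j) (hB01 : ∀ l j, B l j = 0 ∨ 1 ≤ B l j)
    (k : ι) (i j : κ) :
    -(A i j * B k j * ∏ l, R ^ B l j) * z k ≤ A i j * monomial B z j * (B k i - B k j) := by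
  have hAP := mul_nonneg (hA i j) (monomial_nonneg (B := B) hz j)
  rcases hB01 k j with h | h
  · rw [h]; simpa using mul_nonneg hAP (hB k i)
  · have := monomial_le_mul hz hzR hR hB h
    nlinarith [hB k i, hA i j, mul_le_mul_of_nonneg_left this (mul_nonneg (hA i j) (hB k j))]

variable [Fintype κ]

lemma consumptionBound_nonneg (hA : ∀ i j, 0 ≤ A i j) (hB : ∀ l j, 0 ≤ B l j) (hR : 0 ≤ R)
    (k : ι) : 0 ≤ consumptionBound A B R k :=
  Finset.sum_nonneg fun i _ => Finset.sum_nonneg fun j _ =>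
    mul_nonneg (mul_nonneg (hA i j) (hB k j)) (Finset.prod_nonneg fun _ _ => rpow_nonneg hR _)

lemma field_add_eq_sum (k : ι) :
    field A B z k + consumptionBound A B R k * z k = ∑ i, ∑ j,
      (A i j * monomial B z j * (B k i - B k j) + A i j * B k j * (∏ l, R ^ B l j) * z k) := by
  simp only [field, consumptionBound, Finset.sum_mul, ← Finset.sum_add_distrib]

lemma neg_mul_le_field (hz : ∀ l, 0 ≤ z l) (hzR : ∀ l, z l ≤ R) (hR : 1 ≤ R)
    (hA : ∀ i j, 0 ≤ A i j) (hB : ∀ l j, 0 ≤ B l j) (hB01 : ∀ l j, B l j = 0 ∨ 1 ≤ B l j)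
    (k : ι) : -consumptionBound A B R k * z k ≤ field A B z k := by
  have : 0 ≤ field A B z k + consumptionBound A B R k * z k := by
    rw [field_add_eq_sum]
    exact Finset.sum_nonneg fun i _ => Finset.sum_nonneg fun j _ => by
      linarith [neg_mul_le_term hz hzR hR hA hB hB01 k i j]
  linarith

lemma le_field_of_eq_zero (hz : ∀ l, 0 ≤ z l) (hzR : ∀ l, z l ≤ R) (hR : 1 ≤ R)
    (hA : ∀ i j, 0 ≤ A i j) (hB : ∀ l j, 0 ≤ B l j) (hB01 : ∀ l j, B l j = 0 ∨ 1 ≤ B l j)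
    {k : ι} {i j : κ} (hkj : B k j = 0) :
    A i j * monomial B z j * B k i - consumptionBound A B R k * z k ≤ field A B z k := by
  have hterm : ∀ i j, 0 ≤
      A i j * monomial B z j * (B k i - B k j) + A i j * B k j * (∏ l, R ^ B l j) * z k :=
    fun i j => by linarith [neg_mul_le_term hz hzR hR hA hB hB01 k i j]
  have := (Finset.single_le_sum (fun j _ => hterm i j) (Finset.mem_univ j)).trans
    (Finset.single_le_sum (f := fun i => ∑ j, _)
      (fun i _ => Finset.sum_nonneg fun j _ => hterm i j) (Finset.mem_univ i))
  rw [← field_add_eq_sum, hkj] at this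
  simp only [sub_zero, mul_zero, zero_mul, add_zero] at this
  linarith

lemma exists_field_lower_bounds_on_compact {θ : ℝ → ℝ} (hθ : LocallyLipschitz θ)
    (hθ0 : θ 0 = 0) (hθnn : ∀ y, 0 ≤ θ y) (hA : ∀ i j, 0 ≤ A i j) (hB : ∀ l j, 0 ≤ B l j)
    (hB01 : ∀ l j, B l j = 0 ∨ 1 ≤ B l j) {f : EuclideanSpace ℝ ι → EuclideanSpace ℝ ι}
    (hf : ∀ y k, f y k = field A B (fun l => θ (y l)) k) {K : Set ℝ} (hK : IsCompact K)
    {x : ℝ → EuclideanSpace ℝ ι} (hx : ContinuousOn x K) :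
    ∃ C : ι → ℝ, (∀ k, 0 ≤ C k) ∧ ∀ s ∈ K, ∀ k, -C k * |x s k| ≤ f (x s) k ∧
      ∀ i j, B k j = 0 → A i j * monomial B (fun l => θ (x s l)) j * B k i - C k * |x s k| ≤
        f (x s) k := by
  obtain ⟨M, hM⟩ := hK.exists_bound_of_continuousOn hx
  obtain ⟨L, hL, hθL⟩ := hθ.exists_abs_le_mul_abs hθ0 M
  have hxM : ∀ s ∈ K, ∀ l, |x s l| ≤ M := fun s hs l =>
    (PiLp.norm_apply_le (x s) l).trans (hM s hs)
  have hθx : ∀ s ∈ K, ∀ l, θ (x s l) ≤ L * |x s l| := fun s hs l =>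
    (le_abs_self _).trans (hθL _ (hxM s hs l))
  set R := max 1 (L * M)
  have hR : 1 ≤ R := le_max_left _ _
  have hθR : ∀ s ∈ K, ∀ l, θ (x s l) ≤ R := fun s hs l =>
    (hθx s hs l).trans ((mul_le_mul_of_nonneg_left (hxM s hs l) hL).trans (le_max_right _ _))
  have hc := consumptionBound_nonneg hA hB (zero_le_one.trans hR)
  refine ⟨fun k => consumptionBound A B R k * L, fun k => mul_nonneg (hc k) hL,
    fun s hs k => ⟨?_, fun i j hkj => ?_⟩⟩
  all_goals
    rw [hf]
    have := mul_le_mul_of_nonneg_left (hθx s hs k) (hc k)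
  · linarith [neg_mul_le_field (fun _ => hθnn _) (hθR s hs) hR hA hB hB01 k]
  · linarith [le_field_of_eq_zero (i := i) (fun _ => hθnn _) (hθR s hs) hR hA hB hB01 hkj]

end MassAction

open MassAction in
theorem stmt_14
    (n m : ℕ)
    (θ : ℝ → ℝ)
    (hθlip : LocallyLipschitz θ)
    (hθ0 : θ 0 = 0)
    (hθnn : ∀ y : ℝ, 0 ≤ θ y)
    (hθmono : StrictMonoOn θ (Set.Ici (0:ℝ)))
    (A : Matrix (Fin m) (Fin m) ℝ)
    (hAnn : ∀ i j, 0 ≤ A i j)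
    (hAirr : ∀ i j, 0 < ((1 + A) ^ (m - 1)) i j)
    (B : Matrix (Fin n) (Fin m) ℝ)
    (hBnn : ∀ k j, 0 ≤ B k j)
    (hBrow : ∀ k, ∃ j, B k j ≠ 0)
    (hBent : ∀ k j, B k j = 0 ∨ 1 ≤ B k j)
    (f : EuclideanSpace ℝ (Fin n) → EuclideanSpace ℝ (Fin n))
    (hf : ∀ x : EuclideanSpace ℝ (Fin n), ∀ k : Fin n,
      f x k = ∑ i : Fin m, ∑ j : Fin m,
        A i j * (∏ l : Fin n, θ (x l) ^ (B l j)) * (B k i - B k j))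
    :
    ∀ T : ℝ, 0 ≤ T → ∀ x : ℝ → EuclideanSpace ℝ (Fin n),
      (∀ t ∈ Set.Icc (0:ℝ) T, HasDerivWithinAt x (f (x t)) (Set.Icc 0 T) t) →
      (∀ k, 0 ≤ x 0 k) →
      (∃ j : Fin m, ∀ l, 0 < B l j → 0 < x 0 l) →
      ∀ t ∈ Set.Ioc (0:ℝ) T, ∀ k, 0 < x t k := by
  intro T _ x hx hx0 ⟨j₀, hj₀⟩ t ht k
  have hxc : ContinuousOn x (Icc 0 T) := fun t ht => (hx t ht).continuousWithinAt
  have hxk : ∀ k, ∀ t ∈ Icc 0 T, HasDerivWithinAt (fun s => x s k) (f (x t) k) (Icc 0 T) t :=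
    fun k t ht => (EuclideanSpace.proj (𝕜 := ℝ) k).hasFDerivAt.comp_hasDerivWithinAt t (hx t ht)
  obtain ⟨C, hC, hlow⟩ :=
    exists_field_lower_bounds_on_compact hθlip hθ0 hθnn hAnn hBnn hBent hf isCompact_Icc hxc
  have hθpos : ∀ y, 0 < y → 0 < θ y := fun y hy => hθ0 ▸ hθmono self_mem_Ici hy.le hy
  obtain ⟨i₀, hi₀⟩ := hBrow k
  refine Matrix.of_one_add_pow_apply_pos hAnn
    (p := fun i => ∀ t ∈ Ioc 0 T, ∀ k, 0 < B k i → 0 < x t k) (fun t ht k hk => ?_)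
    (fun i j hAij hj t ht k hki => ?_) (m - 1) i₀ (hAirr i₀ j₀) t ht k
    ((hBnn k i₀).lt_of_ne' hi₀)
  · exact (mul_pos (hj₀ k hk) (exp_pos _)).trans_le <| mul_exp_le_of_neg_mul_abs_le_deriv (hC k)
      (hxk k) (hx0 k) (fun s hs => (hlow s hs k).1) t (Ioc_subset_Icc_self ht)
  rcases hBent k j with hkj | hkj
  · have hg := (continuousOn_monomial hθlip.continuous hBnn hxc j).const_smul (A i j * B k i)
    refine pos_of_sub_mul_abs_le_deriv (hC k) (hxk k) (hx0 k) hg (fun s _ => ?_) (fun s hs => ?_)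
      (fun s hs => ?_) t ht
    · exact mul_nonneg (mul_nonneg (hAnn i j) (hBnn k i)) (monomial_nonneg (fun _ => hθnn _) j)
    · exact mul_pos (mul_pos hAij hki) (monomial_pos hBnn fun l hl => hθpos _ (hj s hs l hl))
    · simpa [mul_right_comm] using (hlow s hs k).2 i j hkj
  · exact hj t ht k (by linarith)
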